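/- Let G be a graph with n ≥ 4 vertices. Then κ(M[IAS(G)]) < n if and only if some graph locally equivalent to G has a vertex of degree < (n−1)/2. -/

import Mathlib

open scoped ENat

variable {V : Type*} [Fintype V] [DecidableEq V]

/-- The column of the matrix `IAS(G) = (I | A | A+I)` indexed by `(v, i)`:
`i = 0` gives `φ(v)` (identity column), `i = 1` gives `χ(v)` (column of `A`),
`i = 2` gives `ψ(v)` (column of `A + I`). -/
def iasCol (A : Matrix V V (ZMod 2)) : V × Fin 3 → V → ZMod 2 :=
  fun p w =>
    if p.2 = 0 then (if w = p.1 then 1 else 0)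
    else if p.2 = 1 then A w p.1
    else A w p.1 + (if w = p.1 then 1 else 0)

/-- The rank of a subset of the ground set `W(G) = V × Fin 3` of the isotropic
matroid: the GF(2)-rank of the corresponding set of columns. -/
noncomputable def iasRank (A : Matrix V V (ZMod 2)) (S : Set (V × Fin 3)) : ℕ :=
  Module.finrank (ZMod 2) (Submodule.span (ZMod 2) (iasCol A '' S))

/-- The connectivity function `λ(S) = r(S) + r(W - S) - r(M)`. -/
noncomputable def iasLambda (A : Matrix V V (ZMod 2)) (S : Set (V × Fin 3)) : ℕ :=
  iasRank A S + iasRank A Sᶜ - iasRank A Set.univ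

/-- Independence in the isotropic matroid. -/
def iasIndep (A : Matrix V V (ZMod 2)) (S : Set (V × Fin 3)) : Prop :=
  LinearIndependent (ZMod 2) (fun s : S => iasCol A s.1)

/-- Circuits of the isotropic matroid: minimal dependent sets. -/
def iasCircuit (A : Matrix V V (ZMod 2)) (C : Set (V × Fin 3)) : Prop :=
  ¬ iasIndep A C ∧ ∀ S ⊂ C, iasIndep A S

/-- An ordinary `k`-separation: `λ(S) < k` and `|S|, |W - S| ≥ k`. -/
def OrdinarySep (A : Matrix V V (ZMod 2)) (k : ℕ) (S : Set (V × Fin 3)) : Prop :=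
  0 < k ∧ iasLambda A S < k ∧ k ≤ S.ncard ∧ k ≤ Sᶜ.ncard

/-- A cyclic `k`-separation: `λ(S) < k` and both `S` and `W - S` are dependent. -/
def CyclicSep (A : Matrix V V (ZMod 2)) (k : ℕ) (S : Set (V × Fin 3)) : Prop :=
  0 < k ∧ iasLambda A S < k ∧ ¬ iasIndep A S ∧ ¬ iasIndep A Sᶜ

/-- A vertical `k`-separation: `λ(S) < k` and `r(S), r(W - S) ≥ k`. -/
def VerticalSep (A : Matrix V V (ZMod 2)) (k : ℕ) (S : Set (V × Fin 3)) : Prop :=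
  0 < k ∧ iasLambda A S < k ∧ k ≤ iasRank A S ∧ k ≤ iasRank A Sᶜ

/-- `τ(M) = min {k : M has an ordinary k-separation}`, with `min ∅ = ∞`. -/
noncomputable def iasTau (A : Matrix V V (ZMod 2)) : ℕ∞ :=
  sInf {k : ℕ∞ | ∃ m : ℕ, (m : ℕ∞) = k ∧ ∃ S, OrdinarySep A m S}

/-- `κ*(M) = min ({k : M has a cyclic k-separation} ∪ {|W| - r(M)})`. -/
noncomputable def iasKappaStar (A : Matrix V V (ZMod 2)) : ℕ :=
  sInf ({k : ℕ | ∃ S, CyclicSep A k S} ∪ {3 * Fintype.card V - iasRank A Set.univ})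

/-- `κ(M) = min ({k : M has a vertical k-separation} ∪ {r(M)})`. -/
noncomputable def iasKappa (A : Matrix V V (ZMod 2)) : ℕ :=
  sInf ({k : ℕ | ∃ S, VerticalSep A k S} ∪ {iasRank A Set.univ})

/-- The simple graph underlying a looped simple graph given by its adjacency matrix. -/
def toSimpleGraph (A : Matrix V V (ZMod 2)) : SimpleGraph V where
  Adj v w := v ≠ w ∧ A v w = 1 ∧ A w v = 1
  symm := ⟨fun v w ⟨h1, h2, h3⟩ => ⟨Ne.symm h1, h3, h2⟩⟩
  loopless := ⟨fun v h => h.1 rfl⟩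

/-- The open neighborhood `N_G(v)`. -/
def nbhd (A : Matrix V V (ZMod 2)) (v : V) : Set V := {u | u ≠ v ∧ A v u = 1}

/-- `v` is a pendant vertex: `N_G(v) = {w}` for some `w`. -/
def IsPendant (A : Matrix V V (ZMod 2)) (v : V) : Prop := ∃ w, nbhd A v = {w}

/-- `G` has a pair of twin vertices: `v ≠ w` with `N_G(v) - {w} = N_G(w) - {v}`. -/
def HasTwins (A : Matrix V V (ZMod 2)) : Prop :=
  ∃ v w, v ≠ w ∧ nbhd A v \ {w} = nbhd A w \ {v}

/-- The cut-rank `c_G(X)`: the GF(2)-rank of the submatrix `A[V - X, X]`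
(columns indexed by `X`, rows indexed by `V - X`). -/
noncomputable def cutRank (A : Matrix V V (ZMod 2)) (X : Set V) : ℕ :=
  Module.finrank (ZMod 2)
    (Submodule.span (ZMod 2) ((fun x : V => fun w : ↥(Xᶜ) => A w.1 x) '' X))

/-- `τ_G(X) = ⋃_{x ∈ X} τ_G(x)`, the union of the vertex triples of members of `X`. -/
def tauSet (X : Set V) : Set (V × Fin 3) := {p | p.1 ∈ X}

/-- Loop complementation at `v`. -/
def loopComp (A : Matrix V V (ZMod 2)) (v : V) : Matrix V V (ZMod 2) :=
  fun x y => A x y + if x = v ∧ y = v then 1 else 0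

/-- Simple local complementation at `v`. -/
def simpleLocalComp (A : Matrix V V (ZMod 2)) (v : V) : Matrix V V (ZMod 2) :=
  fun x y => A x y +
    if x ≠ y ∧ (x ≠ v ∧ A v x = 1) ∧ (y ≠ v ∧ A v y = 1) then 1 else 0

/-- Non-simple local complementation at `v`. -/
def nonSimpleLocalComp (A : Matrix V V (ZMod 2)) (v : V) : Matrix V V (ZMod 2) :=
  fun x y => simpleLocalComp A v x y + if x = y ∧ x ≠ v ∧ A v x = 1 then 1 else 0

/-- One local move. -/
def LocalStep (A B : Matrix V V (ZMod 2)) : Prop :=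
  ∃ v, B = loopComp A v ∨ B = simpleLocalComp A v ∨ B = nonSimpleLocalComp A v

/-- Local equivalence: a finite sequence of loop complementations and
(simple or non-simple) local complementations. -/
def LocallyEquiv (A B : Matrix V V (ZMod 2)) : Prop :=
  Relation.ReflTransGen LocalStep A B

/-- `G` has a split: a bipartition `(V₁, V₂)` of `V` with `|V₁|, |V₂| ≥ 2` such that the
GF(2)-rank of `A[V₁, V₂]` is at most 1. -/
def HasSplit (A : Matrix V V (ZMod 2)) : Prop :=
  ∃ X : Set V, 2 ≤ X.ncard ∧ 2 ≤ Xᶜ.ncard ∧ cutRank A X ≤ 1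

/-- A transverse circuit: a circuit of the isotropic matroid meeting each
vertex triple at most once. -/
def IsTransverseCircuit (A : Matrix V V (ZMod 2)) (C : Set (V × Fin 3)) : Prop :=
  iasCircuit A C ∧ ∀ p ∈ C, ∀ q ∈ C, p.1 = q.1 → p = q

/-- An isotropic `k`-separation of `G`: `|X|, |V - X| ≥ k` and `c_G(X) < k`. -/
def IsotropicSep (A : Matrix V V (ZMod 2)) (k : ℕ) (X : Set V) : Prop :=
  k ≤ X.ncard ∧ k ≤ Xᶜ.ncard ∧ cutRank A X < k

/-- The isotropic connectivity `κ_B(G)`, with `min ∅ = ∞`. -/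
noncomputable def kappaB (A : Matrix V V (ZMod 2)) : ℕ∞ :=
  sInf {j : ℕ∞ | ∃ k : ℕ, (k : ℕ∞) = j ∧ ∃ X, IsotropicSep A k X}

/-- The 5-cycle `C₅`. -/
def C5mat : Matrix (Fin 5) (Fin 5) (ZMod 2) :=
  fun i j => if (i.val + 1) % 5 = j.val ∨ (j.val + 1) % 5 = i.val then 1 else 0

/-- The wheel `W₅` : a 5-cycle on `{0,…,4}` plus a hub `5` adjacent to all. -/
def W5mat : Matrix (Fin 6) (Fin 6) (ZMod 2) :=
  fun i j =>
    if (i.val = 5 ∧ j.val ≠ 5) ∨ (j.val = 5 ∧ i.val ≠ 5) then 1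
    else if i.val ≠ 5 ∧ j.val ≠ 5 ∧ ((i.val + 1) % 5 = j.val ∨ (j.val + 1) % 5 = i.val) then 1
    else 0

/-!
For `a : V → GF(2)` put `U(a) = supp a ∪ supp (A a)` (`jointSupport A a`). The columns of
`IAS(G)` at `v` are `e_v`, `A e_v` and their sum, so `a` annihilates all three iff `v ∉ U(a)`, and
a set of columns has rank `< n` iff some `a ≠ 0` annihilates it. As `r(M) = n` and
`r(S) + r(W - S) ≥ n`, this gives `κ < n` iff there are `a, b ≠ 0` with `U(a) ∩ U(b) = ∅`.

Loop complementation and the passage from simple to non-simple local complementation add a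
diagonal matrix, which does not change `U(a)`; simple local complementation at `v` adds
`c cᵀ + diag c` with `c` the indicator of `N(v)` (`nbhdVec A v`), and maps `a` to
`a + (c·a) e_v` without changing `U`. So the property is invariant under local equivalence.

A vertex `v` of degree `d` with `2d + 1 < n` yields the pair `e_v`, `b`, where `b ≠ 0` satisfies
the `2d + 1` conditions `b = 0` on `N[v]`, `A b = 0` on `N(v)`. Conversely let `|U(a)| ≤ n / 2`.
If `a_v = 1` and `v` has an odd number of neighbours in `supp a`, local complementation at `v`
shrinks `supp a` keeping `U(a)`. If there is no such `v` and every vertex has degree `≥ |U(a)|`,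
any `x ∈ supp a` has a neighbour `u ∉ U(a)`; complementing at `u` keeps `a` and creates such a
vertex `x`. Hence some locally equivalent graph has a vertex of degree `< |U(a)|`.
-/

open Matrix

theorem finrank_span_lt_card_iff {K ι : Type*} [Field K] [Fintype ι] [DecidableEq ι]
    (s : Set (ι → K)) :
    Module.finrank K (Submodule.span K s) < Fintype.card ι ↔
      ∃ a : ι → K, a ≠ 0 ∧ ∀ y ∈ s, a ⬝ᵥ y = 0 := by
  constructor
  · intro h
    have hlt : Submodule.span K s < ⊤ := lt_top_iff_ne_top.2 fun htop => by
      rw [htop, finrank_top, Module.finrank_fintype_fun_eq_card] at h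
      exact lt_irrefl _ h
    obtain ⟨f, hf, hle⟩ := (Submodule.span K s).exists_le_ker_of_lt_top hlt
    refine ⟨(dotProductEquiv K ι).symm f, by simpa using hf, fun y hy => ?_⟩
    calc (dotProductEquiv K ι).symm f ⬝ᵥ y
        = dotProductEquiv K ι ((dotProductEquiv K ι).symm f) y := rfl
      _ = 0 := by rw [LinearEquiv.apply_symm_apply]; exact hle (Submodule.subset_span hy)
  · rintro ⟨a, ha, hs⟩
    have hle : Submodule.span K s ≤ LinearMap.ker (dotProductEquiv K ι a) :=
      Submodule.span_le.mpr fun y hy => hs y hy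
    have hker : LinearMap.ker (dotProductEquiv K ι a) < ⊤ := by
      rw [lt_top_iff_ne_top, Ne, LinearMap.ker_eq_top]
      simpa using ha
    rw [← Module.finrank_fintype_fun_eq_card K, ← finrank_top K (ι → K)]
    exact (Submodule.finrank_mono hle).trans_lt (Submodule.finrank_lt_finrank_of_lt hker)

section Rank

variable {n : Type*} [DecidableEq n]

theorem iasCol_zero (A : Matrix n n (ZMod 2)) (v : n) : iasCol A (v, 0) = Pi.single v 1 := by
  ext w
  simp [iasCol, Pi.single_apply]

theorem iasCol_one {A : Matrix n n (ZMod 2)} (hA : A.IsSymm) (v : n) : iasCol A (v, 1) = A v := by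
  ext w
  simp [iasCol, hA.apply]

theorem iasCol_two (A : Matrix n n (ZMod 2)) (v : n) :
    iasCol A (v, 2) = iasCol A (v, 1) + iasCol A (v, 0) := by
  ext w
  simp [iasCol]

variable [Fintype n] (A : Matrix n n (ZMod 2))

theorem iasRank_univ : iasRank A Set.univ = Fintype.card n := by
  have : Submodule.span (ZMod 2) (iasCol A '' Set.univ) = ⊤ := by
    rw [eq_top_iff, ← (Pi.basisFun (ZMod 2) n).span_eq]
    refine Submodule.span_mono ?_
    rintro _ ⟨v, rfl⟩
    exact ⟨(v, 0), trivial, by simp [iasCol_zero]⟩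
  rw [iasRank, this, finrank_top, Module.finrank_fintype_fun_eq_card]

theorem card_le_iasRank_add_iasRank_compl (S : Set (n × Fin 3)) :
    Fintype.card n ≤ iasRank A S + iasRank A Sᶜ := by
  rw [← iasRank_univ A, iasRank, iasRank, iasRank, ← Set.union_compl_self S, Set.image_union,
    Submodule.span_union]
  exact Submodule.finrank_add_le_finrank_add_finrank _ _

theorem iasLambda_add_card (S : Set (n × Fin 3)) :
    iasLambda A S + Fintype.card n = iasRank A S + iasRank A Sᶜ := by
  have := card_le_iasRank_add_iasRank_compl A S
  rw [iasLambda, iasRank_univ]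
  omega

theorem iasKappa_lt_card_iff :
    iasKappa A < Fintype.card n ↔
      ∃ S, iasRank A S < Fintype.card n ∧ iasRank A Sᶜ < Fintype.card n := by
  constructor
  · intro h
    have hmem : iasKappa A ∈ {k | ∃ S, VerticalSep A k S} ∪ {iasRank A Set.univ} :=
      Nat.sInf_mem ⟨_, Or.inr rfl⟩
    rcases hmem with ⟨S, hk, hlam, hS, hSc⟩ | hmem
    · have := iasLambda_add_card A S
      exact ⟨S, by omega, by omega⟩
    · rw [Set.mem_singleton_iff, iasRank_univ] at hmem
      exact absurd hmem h.ne
  · rintro ⟨S, hS, hSc⟩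
    have := iasLambda_add_card A S
    have hsep : VerticalSep A (iasLambda A S + 1) S := by
      refine ⟨?_, ?_, ?_, ?_⟩ <;> omega
    exact (Nat.sInf_le (Or.inl ⟨S, hsep⟩)).trans_lt (by omega)

end Rank

section JointSupport

variable {n R : Type*} [Fintype n] [NonUnitalNonAssocSemiring R]

def jointSupport (A : Matrix n n R) (a : n → R) : Set n :=
  Function.support a ∪ Function.support (A *ᵥ a)

theorem notMem_jointSupport {A : Matrix n n R} {a : n → R} {v : n} :
    v ∉ jointSupport A a ↔ a v = 0 ∧ (A *ᵥ a) v = 0 := by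
  simp [jointSupport]

theorem jointSupport_eq_empty_iff {A : Matrix n n R} {a : n → R} :
    jointSupport A a = ∅ ↔ a = 0 := by
  refine ⟨fun h => funext fun v => (notMem_jointSupport.1 (h ▸ Set.notMem_empty v)).1, ?_⟩
  rintro rfl
  simp [jointSupport]

theorem jointSupport_add_diagonal [DecidableEq n] (A : Matrix n n R) (d a : n → R) :
    jointSupport (A + diagonal d) a = jointSupport A a := by
  ext v
  rw [← not_iff_not, notMem_jointSupport, notMem_jointSupport, add_mulVec, Pi.add_apply,
    mulVec_diagonal]
  constructor <;> rintro ⟨hv, h⟩ <;> simp_all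

theorem ne_zero_of_jointSupport_eq {A B : Matrix n n R} {a b : n → R}
    (h : jointSupport B b = jointSupport A a) (ha : a ≠ 0) : b ≠ 0 := by
  rintro rfl
  rw [(jointSupport_eq_empty_iff (A := B)).2 rfl, eq_comm, jointSupport_eq_empty_iff] at h
  exact ha h

def HasDisjointPair (A : Matrix n n R) : Prop :=
  ∃ a b, a ≠ 0 ∧ b ≠ 0 ∧ Disjoint (jointSupport A a) (jointSupport A b)

end JointSupport

section Columns

variable {n : Type*} [Fintype n] [DecidableEq n] {A : Matrix n n (ZMod 2)}

theorem dotProduct_iasCol_zero (a : n → ZMod 2) (v : n) : a ⬝ᵥ iasCol A (v, 0) = a v := by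
  rw [iasCol_zero, dotProduct_single_one]

theorem dotProduct_iasCol_one (hA : A.IsSymm) (a : n → ZMod 2) (v : n) :
    a ⬝ᵥ iasCol A (v, 1) = (A *ᵥ a) v := by
  rw [iasCol_one hA, dotProduct_comm]
  rfl

theorem dotProduct_iasCol_two (hA : A.IsSymm) (a : n → ZMod 2) (v : n) :
    a ⬝ᵥ iasCol A (v, 2) = (A *ᵥ a) v + a v := by
  rw [iasCol_two A, dotProduct_add, dotProduct_iasCol_one hA, dotProduct_iasCol_zero]

theorem notMem_jointSupport_iff_dotProduct_iasCol (hA : A.IsSymm) (a : n → ZMod 2) (v : n) :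
    v ∉ jointSupport A a ↔ ∀ i, a ⬝ᵥ iasCol A (v, i) = 0 := by
  rw [notMem_jointSupport]
  refine ⟨fun ⟨h0, h1⟩ i => ?_, fun h => ?_⟩
  · fin_cases i
    · simpa [dotProduct_iasCol_zero]
    · simpa [dotProduct_iasCol_one hA]
    · simp [dotProduct_iasCol_two hA, h0, h1]
  · exact ⟨by simpa [dotProduct_iasCol_zero] using h 0,
      by simpa [dotProduct_iasCol_one hA] using h 1⟩

/-- The third column of a vertex triple is the sum of the other two, so whichever of `a`, `b`
annihilates two of them annihilates all three. -/
theorem notMem_jointSupport_or (hA : A.IsSymm) {a b : n → ZMod 2} {v : n}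
    (h : ∀ i, a ⬝ᵥ iasCol A (v, i) = 0 ∨ b ⬝ᵥ iasCol A (v, i) = 0) :
    v ∉ jointSupport A a ∨ v ∉ jointSupport A b := by
  have key : ∀ α β α' β' : ZMod 2, (α = 0 ∨ α' = 0) ∧ (β = 0 ∨ β' = 0) ∧
      (β + α = 0 ∨ β' + α' = 0) → (α = 0 ∧ β = 0) ∨ (α' = 0 ∧ β' = 0) := by decide
  simp only [notMem_jointSupport]
  have h0 := h 0
  have h1 := h 1
  have h2 := h 2
  simp only [dotProduct_iasCol_zero, dotProduct_iasCol_one hA, dotProduct_iasCol_two hA]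
    at h0 h1 h2
  exact key _ _ _ _ ⟨h0, h1, h2⟩

theorem iasRank_lt_card_iff (A : Matrix n n (ZMod 2)) (S : Set (n × Fin 3)) :
    iasRank A S < Fintype.card n ↔ ∃ a ≠ 0, ∀ p ∈ S, a ⬝ᵥ iasCol A p = 0 := by
  simp only [iasRank, finrank_span_lt_card_iff, Set.forall_mem_image]

theorem iasKappa_lt_card_iff_hasDisjointPair (hA : A.IsSymm) :
    iasKappa A < Fintype.card n ↔ HasDisjointPair A := by
  rw [iasKappa_lt_card_iff]
  constructor
  · rintro ⟨S, hS, hSc⟩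
    obtain ⟨a, ha, haS⟩ := (iasRank_lt_card_iff A S).1 hS
    obtain ⟨b, hb, hbS⟩ := (iasRank_lt_card_iff A Sᶜ).1 hSc
    refine ⟨a, b, ha, hb, Set.disjoint_left.2 fun v hva hvb => ?_⟩
    have hcol : ∀ i, a ⬝ᵥ iasCol A (v, i) = 0 ∨ b ⬝ᵥ iasCol A (v, i) = 0 := fun i =>
      (em ((v, i) ∈ S)).imp (haS _) (hbS _)
    exact (notMem_jointSupport_or hA hcol).elim (· hva) (· hvb)
  · rintro ⟨a, b, ha, hb, hab⟩
    refine ⟨{p | a ⬝ᵥ iasCol A p = 0}, (iasRank_lt_card_iff A _).2 ⟨a, ha, fun p hp => hp⟩,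
      (iasRank_lt_card_iff A _).2 ⟨b, hb, fun ⟨v, i⟩ hp => ?_⟩⟩
    have hva : v ∈ jointSupport A a := by
      by_contra hv
      exact hp ((notMem_jointSupport_iff_dotProduct_iasCol hA a v).1 hv i)
    exact (notMem_jointSupport_iff_dotProduct_iasCol hA b v).1
      (Set.disjoint_left.1 hab hva) i

end Columns

section LocalMoves

variable {n : Type*} [DecidableEq n] (A : Matrix n n (ZMod 2)) (v : n)

def nbhdVec : n → ZMod 2 := fun u => if u ≠ v ∧ A v u = 1 then 1 else 0

theorem nbhdVec_self : nbhdVec A v v = 0 := by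
  simp [nbhdVec]

theorem nbhdVec_eq : nbhdVec A v = A v + Pi.single v (A v v) := by
  ext u
  by_cases huv : u = v
  · subst huv
    simp [nbhdVec, CharTwo.add_self_eq_zero]
  · have : ∀ t : ZMod 2, (if t = 1 then 1 else 0) = t := by decide
    simp [nbhdVec, huv, this]

theorem loopComp_eq : loopComp A v = A + diagonal (Pi.single v 1) := by
  ext x y
  by_cases hxy : x = y
  · subst hxy
    by_cases hx : x = v <;> simp [loopComp, hx]
  · simp only [loopComp, Matrix.add_apply, diagonal_apply_ne _ hxy, add_right_inj,
      ite_eq_right_iff, one_ne_zero, imp_false, not_and]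
    rintro rfl
    exact Ne.symm hxy

theorem simpleLocalComp_eq :
    simpleLocalComp A v = A + vecMulVec (nbhdVec A v) (nbhdVec A v) + diagonal (nbhdVec A v) := by
  ext x y
  by_cases hxy : x = y
  · subst hxy
    by_cases hx : x ≠ v ∧ A v x = 1 <;>
      simp [simpleLocalComp, vecMulVec, nbhdVec, hx, add_assoc, CharTwo.add_self_eq_zero]
  · by_cases hx : x ≠ v ∧ A v x = 1 <;> by_cases hy : y ≠ v ∧ A v y = 1 <;>
      simp [simpleLocalComp, vecMulVec, nbhdVec, hxy, hx, hy]

theorem nonSimpleLocalComp_eq :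
    nonSimpleLocalComp A v = simpleLocalComp A v + diagonal (nbhdVec A v) := by
  ext x y
  by_cases hxy : x = y
  · subst hxy
    simp [nonSimpleLocalComp, nbhdVec]
  · simp [nonSimpleLocalComp, hxy]

theorem nbhdVec_simpleLocalComp : nbhdVec (simpleLocalComp A v) v = nbhdVec A v := by
  ext u
  simp [nbhdVec, simpleLocalComp]

theorem nbhdVec_nonSimpleLocalComp : nbhdVec (nonSimpleLocalComp A v) v = nbhdVec A v := by
  ext u
  simp [nbhdVec, nonSimpleLocalComp, simpleLocalComp]

theorem loopComp_loopComp : loopComp (loopComp A v) v = A := by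
  ext x y
  simp [loopComp, add_assoc, CharTwo.add_self_eq_zero]

theorem simpleLocalComp_simpleLocalComp : simpleLocalComp (simpleLocalComp A v) v = A := by
  rw [simpleLocalComp_eq (simpleLocalComp A v), nbhdVec_simpleLocalComp, simpleLocalComp_eq]
  ext x y
  simp only [Matrix.add_apply]
  ring_nf
  reduce_mod_char

theorem nonSimpleLocalComp_nonSimpleLocalComp :
    nonSimpleLocalComp (nonSimpleLocalComp A v) v = A := by
  rw [nonSimpleLocalComp_eq (nonSimpleLocalComp A v), simpleLocalComp_eq,
    nbhdVec_nonSimpleLocalComp, nonSimpleLocalComp_eq, simpleLocalComp_eq]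
  ext x y
  simp only [Matrix.add_apply]
  ring_nf
  reduce_mod_char

variable {A}

theorem simpleLocalComp_isSymm (hA : A.IsSymm) : (simpleLocalComp A v).IsSymm := by
  rw [simpleLocalComp_eq]
  exact (hA.add (transpose_vecMulVec _ _)).add (isSymm_diagonal _)

theorem LocalStep.symm {A B : Matrix n n (ZMod 2)} (h : LocalStep A B) : LocalStep B A := by
  obtain ⟨v, rfl | rfl | rfl⟩ := h
  · exact ⟨v, .inl (loopComp_loopComp A v).symm⟩
  · exact ⟨v, .inr (.inl (simpleLocalComp_simpleLocalComp A v).symm)⟩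
  · exact ⟨v, .inr (.inr (nonSimpleLocalComp_nonSimpleLocalComp A v).symm)⟩

theorem LocalStep.isSymm {A B : Matrix n n (ZMod 2)} (h : LocalStep A B) (hA : A.IsSymm) :
    B.IsSymm := by
  obtain ⟨v, rfl | rfl | rfl⟩ := h
  · rw [loopComp_eq]
    exact hA.add (isSymm_diagonal _)
  · exact simpleLocalComp_isSymm v hA
  · rw [nonSimpleLocalComp_eq]
    exact (simpleLocalComp_isSymm v hA).add (isSymm_diagonal _)

theorem LocallyEquiv.symm {A B : Matrix n n (ZMod 2)} (h : LocallyEquiv A B) :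
    LocallyEquiv B A := by
  induction h with
  | refl => exact .refl
  | tail _ hstep ih => exact .head hstep.symm ih

theorem LocallyEquiv.isSymm {A B : Matrix n n (ZMod 2)} (h : LocallyEquiv A B)
    (hA : A.IsSymm) : B.IsSymm := by
  induction h with
  | refl => exact hA
  | tail _ hstep ih => exact hstep.isSymm ih

end LocalMoves

section Transport

variable {n : Type*} [Fintype n] [DecidableEq n] {A : Matrix n n (ZMod 2)}

theorem nbhdVec_dotProduct (A : Matrix n n (ZMod 2)) (v : n) (a : n → ZMod 2) :
    nbhdVec A v ⬝ᵥ a = (A *ᵥ a) v + A v v * a v := by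
  rw [nbhdVec_eq, add_dotProduct, single_dotProduct]
  rfl

/-- By symmetry `A e_v = c + A_vv e_v` for `c = nbhdVec A v`, so the two terms `(c ⬝ᵥ a) c`
cancel. -/
theorem add_vecMulVec_nbhdVec_mulVec (hA : A.IsSymm) (v : n) (a : n → ZMod 2) :
    (A + vecMulVec (nbhdVec A v) (nbhdVec A v)) *ᵥ (a + Pi.single v (nbhdVec A v ⬝ᵥ a)) =
      A *ᵥ a + Pi.single v (A v v * (nbhdVec A v ⬝ᵥ a)) := by
  have hcol : ∀ y, A y v = nbhdVec A v y + (Pi.single v (A v v) : n → ZMod 2) y := fun y => by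
    rw [hA.apply, nbhdVec_eq]
    by_cases hyv : y = v
    · subst hyv
      simp [CharTwo.add_self_eq_zero]
    · simp [hyv]
  ext y
  simp only [add_mulVec, mulVec_add, vecMulVec_mulVec, mulVec_single, nbhdVec_self, add_zero,
    Pi.add_apply, Pi.smul_apply, op_smul_eq_smul, smul_eq_mul, col_apply, Matrix.add_apply,
    vecMulVec_apply, mul_zero, hcol y, Pi.single_apply]
  split_ifs <;> ring_nf <;> reduce_mod_char

theorem jointSupport_simpleLocalComp (hA : A.IsSymm) (v : n) (a : n → ZMod 2) :
    jointSupport (simpleLocalComp A v) (a + Pi.single v (nbhdVec A v ⬝ᵥ a)) =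
      jointSupport A a := by
  rw [simpleLocalComp_eq, jointSupport_add_diagonal]
  ext y
  rw [← not_iff_not, notMem_jointSupport, notMem_jointSupport, add_vecMulVec_nbhdVec_mulVec hA]
  by_cases hyv : y = v
  · subst hyv
    have key : ∀ α β d : ZMod 2,
        (α + (β + d * α) = 0 ∧ β + d * (β + d * α) = 0) ↔ (α = 0 ∧ β = 0) := by decide
    simpa [nbhdVec_dotProduct] using key (a y) ((A *ᵥ a) y) (A y y)
  · simp [hyv]

theorem LocalStep.exists_jointSupport_eq {B : Matrix n n (ZMod 2)} (h : LocalStep A B)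
    (hA : A.IsSymm) (a : n → ZMod 2) : ∃ b, jointSupport B b = jointSupport A a := by
  obtain ⟨v, rfl | rfl | rfl⟩ := h
  · exact ⟨a, by rw [loopComp_eq, jointSupport_add_diagonal]⟩
  · exact ⟨_, jointSupport_simpleLocalComp hA v a⟩
  · exact ⟨_, by rw [nonSimpleLocalComp_eq, jointSupport_add_diagonal,
      jointSupport_simpleLocalComp hA v a]⟩

theorem LocallyEquiv.exists_jointSupport_eq {B : Matrix n n (ZMod 2)} (h : LocallyEquiv A B)
    (hA : A.IsSymm) (a : n → ZMod 2) : ∃ b, jointSupport B b = jointSupport A a := by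
  induction h with
  | refl => exact ⟨a, rfl⟩
  | tail hAC hstep ih =>
    obtain ⟨c, hc⟩ := ih
    obtain ⟨b, hb⟩ := hstep.exists_jointSupport_eq (LocallyEquiv.isSymm hAC hA) c
    exact ⟨b, hb.trans hc⟩

theorem HasDisjointPair.of_locallyEquiv {B : Matrix n n (ZMod 2)} (h : LocallyEquiv A B)
    (hA : A.IsSymm) (hP : HasDisjointPair A) : HasDisjointPair B := by
  obtain ⟨a, b, ha, hb, hab⟩ := hP
  obtain ⟨a', ha'⟩ := h.exists_jointSupport_eq hA a
  obtain ⟨b', hb'⟩ := h.exists_jointSupport_eq hA b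
  exact ⟨a', b', ne_zero_of_jointSupport_eq ha' ha, ne_zero_of_jointSupport_eq hb' hb,
    ha' ▸ hb' ▸ hab⟩

end Transport

section Reduction

variable {n : Type*} [Fintype n] [DecidableEq n] {A : Matrix n n (ZMod 2)} {a : n → ZMod 2}

theorem exists_jointSupport_simpleLocalComp_eq_and_ncard_support_lt (hA : A.IsSymm) {v : n}
    (hav : a v ≠ 0) (hg : nbhdVec A v ⬝ᵥ a ≠ 0) :
    ∃ b, jointSupport (simpleLocalComp A v) b = jointSupport A a ∧
      (Function.support b).ncard < (Function.support a).ncard := by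
  refine ⟨_, jointSupport_simpleLocalComp hA v a, Set.ncard_lt_ncard ?_ (Set.toFinite _)⟩
  have hcancel : a v + nbhdVec A v ⬝ᵥ a = 0 := by
    revert hav hg
    generalize a v = x
    generalize nbhdVec A v ⬝ᵥ a = y
    revert x y
    decide
  refine ⟨fun y hy => ?_, fun h => h hav (by simp [hcancel])⟩
  by_cases hyv : y = v
  · subst hyv
    simp [hcancel] at hy
  · simpa [hyv] using hy

theorem nbhdVec_simpleLocalComp_dotProduct {u x : n} (hx : x ∈ nbhd A u)
    (hg : nbhdVec A u ⬝ᵥ a = 0) :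
    nbhdVec (simpleLocalComp A u) x ⬝ᵥ a = nbhdVec A x ⬝ᵥ a + a x := by
  have hux : nbhdVec A u x = 1 := if_pos hx
  rw [nbhdVec_dotProduct, nbhdVec_dotProduct, simpleLocalComp_eq]
  simp only [add_mulVec, vecMulVec_mulVec, hg, MulOpposite.op_zero, zero_smul, add_zero,
    Pi.add_apply, mulVec_diagonal, Matrix.add_apply, vecMulVec_apply, diagonal_apply_eq, hux]
  ring_nf
  reduce_mod_char

theorem exists_locallyEquiv_jointSupport_eq_and_ncard_support_lt (hA : A.IsSymm) (ha : a ≠ 0)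
    (hdeg : ∀ w, (jointSupport A a).ncard ≤ (nbhd A w).ncard) :
    ∃ B b, LocallyEquiv A B ∧ jointSupport B b = jointSupport A a ∧
      (Function.support b).ncard < (Function.support a).ncard := by
  by_cases hfree : ∃ v, a v ≠ 0 ∧ nbhdVec A v ⬝ᵥ a ≠ 0
  · obtain ⟨v, hav, hg⟩ := hfree
    obtain ⟨b, hb, hlt⟩ := exists_jointSupport_simpleLocalComp_eq_and_ncard_support_lt hA hav hg
    exact ⟨_, b, .single ⟨v, .inr (.inl rfl)⟩, hb, hlt⟩
  push Not at hfree
  -- Complementing at a neighbour `u ∉ U(a)` of `x ∈ supp a` leaves `a` alone but flips the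
  -- parity of the number of neighbours of `x` in `supp a`.
  obtain ⟨x, hx⟩ := Function.ne_iff.1 ha
  have hxU : x ∈ jointSupport A a := Or.inl hx
  have hcard : (jointSupport A a \ {x}).ncard < (nbhd A x).ncard := by
    rw [Set.ncard_sdiff_singleton_of_mem hxU]
    have := (Set.ncard_pos (Set.toFinite _)).2 ⟨x, hxU⟩
    have := hdeg x
    omega
  obtain ⟨u, hxu, hu⟩ := Set.exists_mem_notMem_of_ncard_lt_ncard hcard
  replace hu : u ∉ jointSupport A a := fun h => hu ⟨h, hxu.1⟩
  have hgu : nbhdVec A u ⬝ᵥ a = 0 := by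
    rw [notMem_jointSupport] at hu
    rw [nbhdVec_dotProduct, hu.1, hu.2, mul_zero, add_zero]
  have hux : x ∈ nbhd A u := ⟨fun h => hxu.1 h.symm, (hA.apply x u).symm ▸ hxu.2⟩
  have hU : jointSupport (simpleLocalComp A u) a = jointSupport A a := by
    simpa [hgu] using jointSupport_simpleLocalComp hA u a
  have hgx : nbhdVec (simpleLocalComp A u) x ⬝ᵥ a ≠ 0 := by
    rwa [nbhdVec_simpleLocalComp_dotProduct hux hgu, hfree x hx, zero_add]
  obtain ⟨b, hb, hlt⟩ :=
    exists_jointSupport_simpleLocalComp_eq_and_ncard_support_lt (simpleLocalComp_isSymm u hA) hx hgx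
  exact ⟨_, b, .tail (.single ⟨u, .inr (.inl rfl)⟩) ⟨x, .inr (.inl rfl)⟩, hb.trans hU, hlt⟩

theorem exists_locallyEquiv_ncard_nbhd_lt (hA : A.IsSymm) (ha : a ≠ 0) :
    ∃ B, LocallyEquiv A B ∧ ∃ w, (nbhd B w).ncard < (jointSupport A a).ncard := by
  induction hk : (Function.support a).ncard using Nat.strong_induction_on generalizing A a with
  | _ k ih =>
  by_cases hdeg : ∃ w, (nbhd A w).ncard < (jointSupport A a).ncard
  · exact ⟨A, .refl, hdeg⟩
  push Not at hdeg
  obtain ⟨B, b, hAB, hU, hlt⟩ :=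
    exists_locallyEquiv_jointSupport_eq_and_ncard_support_lt hA ha hdeg
  obtain ⟨C, hBC, w, hw⟩ := ih _ (hk ▸ hlt) (LocallyEquiv.isSymm hAB hA)
    (ne_zero_of_jointSupport_eq hU ha) rfl
  exact ⟨C, hAB.trans hBC, w, hU ▸ hw⟩

end Reduction

theorem exists_ne_zero_forall_eq_zero_and_mulVec_eq_zero {K ι : Type*} [Field K] [Fintype ι]
    (M : Matrix ι ι K) (s t : Set ι) (h : s.ncard + t.ncard < Fintype.card ι) :
    ∃ b : ι → K, b ≠ 0 ∧ (∀ u ∈ s, b u = 0) ∧ ∀ u ∈ t, (M *ᵥ b) u = 0 := by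
  classical
  let F : (ι → K) →ₗ[K] (s → K) × (t → K) :=
    (LinearMap.funLeft K K Subtype.val).prod
      ((LinearMap.funLeft K K Subtype.val).comp M.mulVecLin)
  have hF : LinearMap.ker F ≠ ⊥ := LinearMap.ker_ne_bot_of_finrank_lt <| by
    simpa only [Module.finrank_prod, Module.finrank_fintype_fun_eq_card,
      ← Nat.card_eq_fintype_card, Nat.card_coe_set_eq] using h
  obtain ⟨b, hb, hb0⟩ := (Submodule.ne_bot_iff _).1 hF
  refine ⟨b, hb0, fun u hu => congrFun (congrArg Prod.fst hb) ⟨u, hu⟩,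
    fun u hu => congrFun (congrArg Prod.snd hb) ⟨u, hu⟩⟩

section LowDegree

variable {n : Type*} [Fintype n] [DecidableEq n] {A : Matrix n n (ZMod 2)}

theorem jointSupport_single_one_subset (hA : A.IsSymm) (v : n) :
    jointSupport A (Pi.single v 1) ⊆ insert v (nbhd A v) := by
  intro y hy
  by_cases hyv : y = v
  · exact .inl hyv
  · have hne : ∀ t : ZMod 2, t ≠ 0 → t = 1 := by decide
    refine .inr ⟨hyv, hne _ ?_⟩
    simpa [jointSupport, hyv, mulVec_single_one, hA.apply v y] using hy

theorem hasDisjointPair_of_two_mul_ncard_nbhd_lt (hA : A.IsSymm) (v : n)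
    (h : 2 * (nbhd A v).ncard < Fintype.card n - 1) : HasDisjointPair A := by
  have hv : v ∉ nbhd A v := fun hv => hv.1 rfl
  obtain ⟨b, hb, hbN, hAbN⟩ := exists_ne_zero_forall_eq_zero_and_mulVec_eq_zero A
    (insert v (nbhd A v)) (nbhd A v) (by rw [Set.ncard_insert_of_notMem hv]; omega)
  refine ⟨Pi.single v 1, b, by simp, hb,
    (Set.disjoint_left.2 fun y hy => ?_).mono_left (jointSupport_single_one_subset hA v)⟩
  rw [notMem_jointSupport]
  refine ⟨hbN y hy, ?_⟩
  rcases hy with rfl | hy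
  · have hnb : nbhdVec A y ⬝ᵥ b = 0 := Finset.sum_eq_zero fun u _ => by
      by_cases hu : u ≠ y ∧ A y u = 1
      · rw [hbN u (.inr hu), mul_zero]
      · simp [nbhdVec, hu]
    simpa [nbhdVec_dotProduct, hbN y (.inl rfl)] using hnb
  · exact hAbN y hy

end LowDegree

theorem HasDisjointPair.exists_locallyEquiv_two_mul_ncard_nbhd_lt {n : Type*} [Fintype n]
    [DecidableEq n] {A : Matrix n n (ZMod 2)} (hA : A.IsSymm) (hP : HasDisjointPair A) :
    ∃ B, LocallyEquiv A B ∧ ∃ v, 2 * (nbhd B v).ncard < Fintype.card n - 1 := by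
  obtain ⟨a, b, ha, hb, hab⟩ := hP
  have hsum : (jointSupport A a).ncard + (jointSupport A b).ncard ≤ Fintype.card n := by
    rw [← Set.ncard_union_eq hab, ← Nat.card_eq_fintype_card, ← Set.ncard_univ]
    exact Set.ncard_le_ncard (Set.subset_univ _)
  wlog hle : (jointSupport A a).ncard ≤ (jointSupport A b).ncard generalizing a b
  · exact this b a hb ha hab.symm (by omega) (by omega)
  obtain ⟨B, hAB, w, hw⟩ := exists_locallyEquiv_ncard_nbhd_lt hA ha
  exact ⟨B, hAB, w, by omega⟩

theorem stmt11_general (A : Matrix V V (ZMod 2)) (hA : A.IsSymm) :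
    iasKappa A < Fintype.card V ↔
      ∃ B, LocallyEquiv A B ∧ ∃ v, 2 * (nbhd B v).ncard < Fintype.card V - 1 := by
  rw [iasKappa_lt_card_iff_hasDisjointPair hA]
  refine ⟨fun hP => hP.exists_locallyEquiv_two_mul_ncard_nbhd_lt hA, ?_⟩
  rintro ⟨B, hAB, v, hv⟩
  have hB := hAB.isSymm hA
  exact (hasDisjointPair_of_two_mul_ncard_nbhd_lt hB v hv).of_locallyEquiv hAB.symm hB

theorem stmt11 (A : Matrix V V (ZMod 2)) (hA : A.IsSymm) (hn : 4 ≤ Fintype.card V) :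
    iasKappa A < Fintype.card V ↔
      ∃ B, LocallyEquiv A B ∧ ∃ v, 2 * (nbhd B v).ncard < Fintype.card V - 1 :=
  stmt11_general A hA
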